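/- arXiv:0812.3286 — 2 statements merged into one kernel-verified Lean document; each statement's English description precedes it below -/
import Mathlib

section
/- Let A be a finite-dimensional k-algebra given by a quiver Q with vertices {1,...,n} and admissible relations R, with rad(A) of nilpotency degree N (rad^N(A) = 0, rad^{N-1}(A) ≠ 0). Form the algebra Ã by adding to Q, for every vertex k, a new vertex k̃ and a new arrow k → k̃, keeping the relations R. Then rad(Ã) has nilpotency degree N+1, and for every original vertex k ∈ {1,...,n}, the right projective module e_k Ã satisfies e_k · rad^N(Ã) = 0 (i.e. its Loewy length is at most N, strictly less than N+1). -/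
/-- The Jacobson radical of a `k`-algebra `A`, viewed as a `k`-subspace of `A`. -/
noncomputable def radSubmodule (k A : Type*) [Field k] [Ring A] [Algebra k A] :
    Submodule k A :=
  Submodule.restrictScalars k ((⊥ : Ideal A).jacobson)

section AtildeModel

variable {k A : Type*} [Field k] [Ring A] [Algebra k A] {n : ℕ}

/-- The action of the semisimple part `k^n` (spanned by the tilded idempotents) on the
bimodule `D ≅ A` of "new arrows": `s ⋆ m = ∑ᵢ sᵢ • (eᵢ * m)`. -/
def starAct (e : Fin n → A) (s : Fin n → k) (m : A) : A :=
  ∑ i, s i • (e i * m)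

/-- The algebra `Ã`, obtained from `A` (with complete set of primitive orthogonal
idempotents `e₁, ..., eₙ`) by attaching to each vertex `k` a new vertex `k̃` and a new
arrow `k → k̃`, modelled as `A ⊕ D ⊕ k^n` with `D ≅ A`, and multiplication
`(a, d, s)(b, e, t) = (a b, d b + s ⋆ e, s t)`. -/
def tmul (e : Fin n → A) (p q : A × A × (Fin n → k)) : A × A × (Fin n → k) :=
  (p.1 * q.1, p.2.1 * q.1 + starAct e p.2.2 q.2.1, p.2.2 * q.2.2)

/-- `prods mul S m` is the set of all (right-nested) products of `m + 1` elements of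
`S`. -/
def prods {T : Type*} (mul : T → T → T) (S : Set T) : ℕ → Set T
  | 0 => S
  | (m + 1) => {z | ∃ x ∈ S, ∃ y ∈ prods mul S m, z = mul x y}

/-- The Jacobson radical of `Ã`: `rad Ã = rad A ⊕ D ⊕ 0`. -/
def radSetTilde (k : Type*) [Field k] {A : Type*} [Ring A] [Algebra k A] (n : ℕ) :
    Set (A × A × (Fin n → k)) :=
  {p | p.1 ∈ radSubmodule k A ∧ p.2.2 = 0}

lemma starAct_zero (e : Fin n → A) (m : A) : starAct e (0 : Fin n → k) m = 0 := by
  simp [starAct]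

lemma prods_struct (e : Fin n → A) :
    ∀ m : ℕ, ∀ z ∈ prods (tmul e) (radSetTilde k n) m,
      z.2.2 = 0 ∧ z.1 ∈ radSubmodule k A ^ (m + 1) ∧
      ∃ d w : A, w ∈ radSubmodule k A ^ m ∧ z.2.1 = d * w := by
  intro m
  induction m with
  | zero =>
    intro z hz
    refine ⟨hz.2, by simpa [pow_one] using hz.1, z.2.1, 1, ?_, (mul_one _).symm⟩
    rw [pow_zero]
    exact Submodule.one_le.mp le_rfl
  | succ m ih =>
    rintro z ⟨x, hx, y, hy, rfl⟩
    obtain ⟨h22, h1, d, w, hw, h21⟩ := ih y hy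
    refine ⟨?_, ?_, x.2.1, y.1, h1, ?_⟩
    · show x.2.2 * y.2.2 = 0
      rw [hx.2, zero_mul]
    · show x.1 * y.1 ∈ _
      rw [pow_succ']
      exact Submodule.mul_mem_mul hx.1 h1
    · show x.2.1 * y.1 + starAct e x.2.2 y.2.1 = x.2.1 * y.1
      rw [hx.2, starAct_zero, add_zero]

lemma pow_le_span_prods (M : Submodule k A) :
    ∀ m : ℕ, M ^ (m + 1) ≤ Submodule.span k
      {z : A | ∃ l : List A, l.length = m + 1 ∧ (∀ x ∈ l, x ∈ M) ∧ z = l.prod} := by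
  intro m
  induction m with
  | zero =>
    rw [pow_one]
    intro a ha
    exact Submodule.subset_span ⟨[a], rfl, by simpa using ha, by simp⟩
  | succ m ih =>
    rw [pow_succ']
    refine Submodule.mul_le.mpr fun a ha b hb => ?_
    have hb' := ih hb
    refine Submodule.span_induction
      (fun z hz => ?_) (by simp)
      (fun u v _ _ hu hv => by rw [mul_add]; exact add_mem hu hv)
      (fun c u _ hu => by rw [mul_smul_comm]; exact Submodule.smul_mem _ c hu) hb'
    obtain ⟨l, hlen, hmem, rfl⟩ := hz
    refine Submodule.subset_span ⟨a :: l, by simp [hlen], ?_, by simp⟩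
    intro x hx
    rcases List.mem_cons.mp hx with h | h
    · exact h ▸ ha
    · exact hmem x h

lemma chain_mem (e : Fin n → A) :
    ∀ l : List A, l ≠ [] → (∀ x ∈ l, x ∈ radSubmodule k A) →
      ((l.prod, (0 : A), (0 : Fin n → k)) ∈
        prods (tmul e) (radSetTilde k n) (l.length - 1)) := by
  intro l
  induction l with
  | nil => intro h; exact absurd rfl h
  | cons a t ih =>
    intro _ hmem
    cases t with
    | nil =>
      show _ ∈ prods (tmul e) (radSetTilde k n) 0
      exact ⟨by simpa using hmem a (by simp), rfl⟩
    | cons b s =>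
      have h := ih (by simp) (fun x hx => hmem x (List.mem_cons_of_mem a hx))
      have hlen : (b :: s).length - 1 = s.length := by simp
      rw [hlen] at h
      show _ ∈ prods (tmul e) (radSetTilde k n) (s.length + 1)
      refine ⟨(a, 0, 0), ⟨hmem a (by simp), rfl⟩, ((b :: s).prod, 0, 0), h, ?_⟩
      simp [tmul, starAct_zero, List.prod_cons]


/-- Let `A` be a finite-dimensional `k`-algebra with `rad^N A = 0`,
`rad^{N-1} A ≠ 0`, given with a complete set of primitive orthogonal idempotents
`e₁, ..., eₙ`.  Form `Ã` by attaching, for every vertex `k`, a new vertex `k̃` and a new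
arrow `k → k̃` (modelled by `tmul` above).  Then `rad Ã` has nilpotency degree `N + 1`
(all products of `N+1` radical elements vanish, while some product of `N` radical
elements does not), and for every original vertex `k` the right projective `e_k Ã`
satisfies `e_k · rad^N Ã = 0`. -/
theorem statement7 {k A : Type*} [Field k] [Ring A] [Algebra k A]
    [FiniteDimensional k A] [Nontrivial A]
    (n N : ℕ) (hN : 1 ≤ N)
    (e : Fin n → A)
    (hidem : ∀ i, e i * e i = e i)
    (horth : ∀ i j, i ≠ j → e i * e j = 0)
    (hsum : ∑ i, e i = 1)
    (hprim : ∀ i, e i ≠ 0 ∧ ∀ f g : A, f * g = 0 → g * f = 0 → f * f = f →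
        g * g = g → f + g = e i → f = 0 ∨ g = 0)
    (hnilp : radSubmodule k A ^ N = ⊥)
    (hnilp' : N = 1 ∨ radSubmodule k A ^ (N - 1) ≠ ⊥) :
    (∀ z ∈ prods (tmul e) (radSetTilde k n) N, z = 0) ∧
    (∃ z ∈ prods (tmul e) (radSetTilde k n) (N - 1), z ≠ 0) ∧
    (∀ (j : Fin n), ∀ z ∈ prods (tmul e) (radSetTilde k n) (N - 1),
        tmul e (e j, 0, 0) z = 0) := by
  have hpowN1 : radSubmodule k A ^ (N + 1) = ⊥ := by
    rw [pow_succ, hnilp, Submodule.bot_mul]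
  refine ⟨?_, ?_, ?_⟩
  · -- products of N+1 radical elements vanish
    intro z hz
    obtain ⟨h22, h1, d, w, hw, h21⟩ := prods_struct e N z hz
    rw [hpowN1, Submodule.mem_bot] at h1
    rw [hnilp, Submodule.mem_bot] at hw
    rw [hw, mul_zero] at h21
    obtain ⟨z1, z2, z3⟩ := z
    simp only at h22 h1 h21
    simp [h22, h1, h21, Prod.ext_iff]
  · -- a nonzero product of N radical elements
    rcases Nat.lt_or_ge N 2 with hN2 | hN2
    · -- N = 1
      have hN1 : N = 1 := le_antisymm (by omega) hN
      subst hN1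
      refine ⟨((0 : A), (1 : A), (0 : Fin n → k)), ⟨zero_mem _, rfl⟩, ?_⟩
      intro h
      have : (1 : A) = 0 := congrArg (fun p => p.2.1) h
      exact one_ne_zero this
    · -- N ≥ 2
      have hne : radSubmodule k A ^ (N - 1) ≠ ⊥ := by
        rcases hnilp' with h | h
        · omega
        · exact h
      obtain ⟨x, hx, hx0⟩ := Submodule.exists_mem_ne_zero_of_ne_bot hne
      have hxs : x ∈ Submodule.span k
          {z : A | ∃ l : List A, l.length = (N - 2) + 1 ∧
            (∀ y ∈ l, y ∈ radSubmodule k A) ∧ z = l.prod} := by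
        rw [show N - 1 = N - 2 + 1 by omega] at hx
        exact pow_le_span_prods (radSubmodule k A) (N - 2) hx
      have hlist : ∃ l : List A, l.length = (N - 2) + 1 ∧
          (∀ y ∈ l, y ∈ radSubmodule k A) ∧ l.prod ≠ 0 := by
        by_contra hc
        push_neg at hc
        have hsub : {z : A | ∃ l : List A, l.length = (N - 2) + 1 ∧
            (∀ y ∈ l, y ∈ radSubmodule k A) ∧ z = l.prod} ⊆ ((⊥ : Submodule k A) : Set A) := by
          rintro z ⟨l, hlen, hmem, rfl⟩
          simpa using hc l hlen hmem
        have := Submodule.span_le.mpr hsub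
        exact hx0 (Submodule.mem_bot (R := k) |>.mp (this hxs))
      obtain ⟨l, hlen, hmem, hprod⟩ := hlist
      have hlne : l ≠ [] := by
        intro h; rw [h] at hlen; simp at hlen
      have hw := chain_mem e l hlne hmem
      rw [hlen] at hw
      simp only [Nat.add_sub_cancel] at hw
      refine ⟨((0 : A), l.prod, (0 : Fin n → k)), ?_, ?_⟩
      · rw [show N - 1 = (N - 2) + 1 by omega]
        refine ⟨((0 : A), (1 : A), (0 : Fin n → k)), ⟨zero_mem _, rfl⟩,
          (l.prod, (0 : A), (0 : Fin n → k)), hw, ?_⟩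
        simp [tmul, starAct_zero]
      · intro h
        exact hprod (congrArg (fun p => p.2.1) h)
  · -- e_j · rad^N Ã = 0
    intro j z hz
    obtain ⟨h22, h1, _⟩ := prods_struct e (N - 1) z hz
    rw [show N - 1 + 1 = N by omega, hnilp, Submodule.mem_bot] at h1
    simp [tmul, h1, h22, starAct_zero, Prod.ext_iff]
end AtildeModel
end

section
/- Let A be a ring with a filtration by two-sided ideals A = I_0 ⊋ I_1 ⊋ ... ⊋ I_N = 0 satisfying I_i I_j ⊆ I_{i+j}. Define 𝔅 as the algebra of ℤ×ℤ matrices (finitely supported) with entry at position (i,j) lying in A if i ≥ j and in I_{j-i} if i < j, and define 𝔍 ⊆ 𝔅 by: the (i,j)-entry lies in I_{N-(i-j)} if i−N < j < i, in 𝔅(i,j) if j ≤ i−N, and is 0 otherwise. Then 𝔅 is closed under matrix multiplication and 𝔍 is a two-sided ideal of 𝔅. -/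
open scoped BigOperators

section

variable {A : Type*} [Ring A]

/-- The `(i,j)` entry constraint of the algebra `𝔅`: all of `A` below (and on) the
diagonal, and `I_{j-i}` above it. -/
noncomputable def entB (I : ℕ → TwoSidedIdeal A) (i j : ℤ) : TwoSidedIdeal A :=
  if j ≤ i then ⊤ else I (j - i).toNat

/-- The `(i,j)` entry constraint of the ideal `𝔍`: everything for `j ≤ i - N`,
`I_{N-(i-j)}` for `i - N < j ≤ i`, and `0` above the diagonal. -/
noncomputable def entJ (I : ℕ → TwoSidedIdeal A) (N : ℕ) (i j : ℤ) : TwoSidedIdeal A :=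
  if j ≤ i - N then ⊤ else if j ≤ i then I ((N : ℤ) - (i - j)).toNat else ⊥

/-- Membership in `𝔅`: a finitely supported `ℤ×ℤ` matrix whose entries satisfy `entB`. -/
def memB (I : ℕ → TwoSidedIdeal A) (M : ℤ → ℤ → A) : Prop :=
  {p : ℤ × ℤ | M p.1 p.2 ≠ 0}.Finite ∧ ∀ i j, M i j ∈ entB I i j

/-- Membership in `𝔍`. -/
def memJ (I : ℕ → TwoSidedIdeal A) (N : ℕ) (M : ℤ → ℤ → A) : Prop :=
  {p : ℤ × ℤ | M p.1 p.2 ≠ 0}.Finite ∧ ∀ i j, M i j ∈ entJ I N i j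

/-- Multiplication of finitely supported `ℤ×ℤ` matrices. -/
noncomputable def matMul (M N : ℤ → ℤ → A) : ℤ → ℤ → A :=
  fun i j => ∑ᶠ l : ℤ, M i l * N l j

end

section Aux

variable {A : Type*} [Ring A]

/-- Extension of the filtration to `ℤ`. -/
noncomputable def Jext (I : ℕ → TwoSidedIdeal A) (n : ℤ) : TwoSidedIdeal A :=
  if n ≤ 0 then ⊤ else I n.toNat

lemma entB_eq (I : ℕ → TwoSidedIdeal A) (i j : ℤ) : entB I i j = Jext I (j - i) := by
  unfold entB Jext
  simp [sub_nonpos]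

lemma entJ_eq (I : ℕ → TwoSidedIdeal A) (N : ℕ) (i j : ℤ) :
    entJ I N i j = if j ≤ i then Jext I ((N : ℤ) - (i - j)) else ⊥ := by
  unfold entJ Jext
  split_ifs <;> first | rfl | omega

lemma Jext_mono (I : ℕ → TwoSidedIdeal A) (hanti : Antitone I) {m n : ℤ} (h : m ≤ n) :
    Jext I n ≤ Jext I m := by
  unfold Jext
  split_ifs with h1 h2
  · exact le_refl _
  · omega
  · exact le_top
  · exact hanti (Int.toNat_le_toNat h)

lemma Jext_bot (I : ℕ → TwoSidedIdeal A) (N : ℕ) (hN : 0 < N)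
    (hIN : ∀ m, N ≤ m → I m = ⊥) {n : ℤ} (h : (N : ℤ) ≤ n) : Jext I n = ⊥ := by
  unfold Jext
  rw [if_neg (by omega)]
  exact hIN n.toNat (by omega)

lemma Jext_mul (I : ℕ → TwoSidedIdeal A) (hanti : Antitone I)
    (hImul : ∀ (i j : ℕ) (x y : A), x ∈ I i → y ∈ I j → x * y ∈ I (i + j))
    {a b : ℤ} {x y : A} (hx : x ∈ Jext I a) (hy : y ∈ Jext I b) :
    x * y ∈ Jext I (a + b) := by
  rcases le_or_gt a 0 with ha | ha
  · exact TwoSidedIdeal.mul_mem_left _ _ _ (Jext_mono I hanti (by omega : a + b ≤ b) hy)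
  rcases le_or_gt b 0 with hb | hb
  · exact TwoSidedIdeal.mul_mem_right _ _ _ (Jext_mono I hanti (by omega : a + b ≤ a) hx)
  · have hx' : x ∈ I a.toNat := by simpa [Jext, show ¬ a ≤ 0 by omega] using hx
    have hy' : y ∈ I b.toNat := by simpa [Jext, show ¬ b ≤ 0 by omega] using hy
    have h := hImul _ _ _ _ hx' hy'
    have he : a.toNat + b.toNat = (a + b).toNat := by omega
    rw [he] at h
    simpa [Jext, show ¬ a + b ≤ 0 by omega] using h

lemma finsum_mem_tsi (S : TwoSidedIdeal A) (f : ℤ → A) (h : ∀ l, f l ∈ S) :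
    ∑ᶠ l, f l ∈ S :=
  finsum_induction _ S.zero_mem (fun _ _ => S.add_mem) h

lemma matMul_support_finite {M M' : ℤ → ℤ → A}
    (hM : {p : ℤ × ℤ | M p.1 p.2 ≠ 0}.Finite) (hM' : {p : ℤ × ℤ | M' p.1 p.2 ≠ 0}.Finite) :
    {p : ℤ × ℤ | matMul M M' p.1 p.2 ≠ 0}.Finite := by
  apply Set.Finite.subset ((hM.image Prod.fst).prod (hM'.image Prod.snd))
  rintro ⟨i, j⟩ hp
  simp only [Set.mem_setOf_eq, matMul] at hp
  have : ∃ l, M i l * M' l j ≠ 0 := by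
    by_contra h
    push_neg at h
    exact hp (finsum_eq_zero_of_forall_eq_zero h)
  obtain ⟨l, hl⟩ := this
  exact ⟨⟨(i, l), left_ne_zero_of_mul hl, rfl⟩, ⟨(l, j), right_ne_zero_of_mul hl, rfl⟩⟩

lemma mem_entJ_of_Jext (I : ℕ → TwoSidedIdeal A) (N : ℕ) (hN : 0 < N)
    (hanti : Antitone I) (hIN : ∀ m, N ≤ m → I m = ⊥)
    {i j n : ℤ} (hn : (N : ℤ) - (i - j) ≤ n) {x : A} (hx : x ∈ Jext I n) :
    x ∈ entJ I N i j := by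
  rw [entJ_eq]
  split_ifs with h
  · exact Jext_mono I hanti hn hx
  · have hb : Jext I n = ⊥ := Jext_bot I N hN hIN (by omega)
    rwa [hb] at hx

end Aux


/-- Let `A` be a ring with a filtration `A = I_0 ⊋ I_1 ⊋ ... ⊋ I_N = 0` by
two-sided ideals satisfying `I_i I_j ⊆ I_{i+j}`.  Then the set `𝔅` of finitely supported
`ℤ×ℤ` matrices with `(i,j)` entry in `A` for `i ≥ j` and in `I_{j-i}` for `i < j` is
closed under matrix multiplication, and the subset `𝔍` (entries in `I_{N-(i-j)}` for
`i-N < j < i`, unconstrained for `j ≤ i-N`, zero for `j ≥ i`) is a two-sided ideal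
of `𝔅`. -/
theorem statement11 {A : Type*} [Ring A] (N : ℕ) (hN : 0 < N)
    (I : ℕ → TwoSidedIdeal A)
    (hI0 : I 0 = ⊤) (hIN : ∀ m, N ≤ m → I m = ⊥)
    (hstrict : ∀ m < N, I (m + 1) < I m)
    (hanti : Antitone I)
    (hImul : ∀ (i j : ℕ) (x y : A), x ∈ I i → y ∈ I j → x * y ∈ I (i + j)) :
    (∀ M M', memB I M → memB I M' → memB I (matMul M M')) ∧
    (∀ M, memJ I N M → memB I M) ∧
    (∀ M M', memJ I N M → memJ I N M' → memJ I N (fun i j => M i j + M' i j)) ∧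
    (∀ M, memJ I N M → memJ I N (fun i j => - M i j)) ∧
    (∀ M M', memB I M → memJ I N M' → memJ I N (matMul M M')) ∧
    (∀ M M', memJ I N M → memB I M' → memJ I N (matMul M M')) := by
  -- entrywise multiplication lemmas
  have hBB : ∀ (i l j : ℤ) (x y : A), x ∈ entB I i l → y ∈ entB I l j →
      x * y ∈ entB I i j := by
    intro i l j x y hx hy
    rw [entB_eq] at hx hy ⊢
    have h := Jext_mul I hanti hImul hx hy
    rwa [show (l - i) + (j - l) = j - i by ring] at h
  have hBJ : ∀ (i l j : ℤ) (x y : A), x ∈ entB I i l → y ∈ entJ I N l j →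
      x * y ∈ entJ I N i j := by
    intro i l j x y hx hy
    rw [entB_eq] at hx
    rw [entJ_eq] at hy
    by_cases h : j ≤ l
    · rw [if_pos h] at hy
      have hm := Jext_mul I hanti hImul hx hy
      exact mem_entJ_of_Jext I N hN hanti hIN (by omega) hm
    · rw [if_neg h, TwoSidedIdeal.mem_bot] at hy
      rw [hy, mul_zero]
      exact (entJ I N i j).zero_mem
  have hJB : ∀ (i l j : ℤ) (x y : A), x ∈ entJ I N i l → y ∈ entB I l j →
      x * y ∈ entJ I N i j := by
    intro i l j x y hx hy
    rw [entJ_eq] at hx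
    rw [entB_eq] at hy
    by_cases h : l ≤ i
    · rw [if_pos h] at hx
      have hm := Jext_mul I hanti hImul hx hy
      exact mem_entJ_of_Jext I N hN hanti hIN (by omega) hm
    · rw [if_neg h, TwoSidedIdeal.mem_bot] at hx
      rw [hx, zero_mul]
      exact (entJ I N i j).zero_mem
  have hJle : ∀ (i j : ℤ) (x : A), x ∈ entJ I N i j → x ∈ entB I i j := by
    intro i j x hx
    by_cases h : j ≤ i
    · simp [entB, h]
    · rw [entJ_eq, if_neg h, TwoSidedIdeal.mem_bot] at hx
      rw [hx]
      exact (entB I i j).zero_mem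
  refine ⟨?_, ?_, ?_, ?_, ?_, ?_⟩
  · intro M M' hM hM'
    exact ⟨matMul_support_finite hM.1 hM'.1,
      fun i j => finsum_mem_tsi _ _ fun l => hBB i l j _ _ (hM.2 i l) (hM'.2 l j)⟩
  · intro M hM
    exact ⟨hM.1, fun i j => hJle i j _ (hM.2 i j)⟩
  · intro M M' hM hM'
    refine ⟨(hM.1.union hM'.1).subset ?_, fun i j => (entJ I N i j).add_mem (hM.2 i j) (hM'.2 i j)⟩
    rintro ⟨i, j⟩ hp
    simp only [Set.mem_setOf_eq] at hp
    by_contra hc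
    simp only [Set.mem_union, Set.mem_setOf_eq, not_or, not_not] at hc
    exact hp (by simp [hc.1, hc.2])
  · intro M hM
    refine ⟨hM.1.subset ?_, fun i j => (entJ I N i j).neg_mem (hM.2 i j)⟩
    rintro ⟨i, j⟩ hp
    simp only [Set.mem_setOf_eq] at hp ⊢
    simpa using hp
  · intro M M' hM hM'
    exact ⟨matMul_support_finite hM.1 hM'.1,
      fun i j => finsum_mem_tsi _ _ fun l => hBJ i l j _ _ (hM.2 i l) (hM'.2 l j)⟩
  · intro M M' hM hM'
    exact ⟨matMul_support_finite hM.1 hM'.1,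
      fun i j => finsum_mem_tsi _ _ fun l => hJB i l j _ _ (hM.2 i l) (hM'.2 l j)⟩
end
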